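/- arXiv:2302.03863 — 2 statements merged into one kernel-verified Lean document; each statement's English description precedes it below -/
import Mathlib

section
/- Let H be a symmetric positive semidefinite matrix with largest eigenvalue λ₁ (with unit eigenvector v) and second-largest eigenvalue λ₂. Suppose x⋆ ≠ 0 satisfies the μ-incoherence condition |⟨v, x⋆⟩|² ≤ μ‖x⋆‖² with 0 ≤ μ < 1, and let σ = τλ₁ with τ ∈ (0,1). Then (λ₁ − σ)‖x⋆‖² / ‖x⋆‖²_H ≥ (1 − τ)(μ + λ₂/λ₁)⁻¹, where ‖x⋆‖²_H = ⟨x⋆, H x⋆⟩ (assuming ‖x⋆‖²_H > 0 and λ₁ > 0). -/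
/-!
Split `x⋆ = c • v + w` with `c = ⟨v, x⋆⟩` and `w ⊥ v`. Since `v` is an eigenvector of the
symmetric `H`, the cross terms vanish and `‖x⋆‖²_H = λ₁ c² + ‖w‖²_H ≤ λ₁ c² + λ₂ (‖x⋆‖² - c²)`.
Incoherence bounds `c² ≤ μ ‖x⋆‖²`, so `‖x⋆‖²_H ≤ (λ₁ μ + λ₂) ‖x⋆‖²`, which rearranges to the claim
because `λ₁ - σ = (1 - τ) λ₁`.
-/

open Matrix

section Decomposition

variable {ι R : Type*} [Fintype ι] [CommRing R] {v : ι → R}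

lemma sub_smul_dotProduct_self_of_dotProduct_self_eq_one (hv : v ⬝ᵥ v = 1) (x : ι → R) :
    (x - (v ⬝ᵥ x) • v) ⬝ᵥ v = 0 := by
  rw [sub_dotProduct, smul_dotProduct, hv, dotProduct_comm, smul_eq_mul, mul_one, sub_self]

lemma dotProduct_self_sub_smul_of_dotProduct_self_eq_one (hv : v ⬝ᵥ v = 1) (x : ι → R) :
    (x - (v ⬝ᵥ x) • v) ⬝ᵥ (x - (v ⬝ᵥ x) • v) = x ⬝ᵥ x - (v ⬝ᵥ x) ^ 2 := by
  simp only [sub_dotProduct, dotProduct_sub, smul_dotProduct, dotProduct_smul, hv, smul_eq_mul,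
    dotProduct_comm x v]
  ring

lemma Matrix.IsSymm.dotProduct_mulVec_eq_of_mulVec_eq_smul {H : Matrix ι ι R} (hH : H.IsSymm)
    {lam : R} (hHv : H *ᵥ v = lam • v) (hv : v ⬝ᵥ v = 1) (x : ι → R) :
    x ⬝ᵥ H *ᵥ x = lam * (v ⬝ᵥ x) ^ 2
      + (x - (v ⬝ᵥ x) • v) ⬝ᵥ H *ᵥ (x - (v ⬝ᵥ x) • v) := by
  have hHx : v ⬝ᵥ H *ᵥ x = lam * (v ⬝ᵥ x) := by
    rw [← hH.eq, dotProduct_transpose_mulVec, hHv, dotProduct_smul, smul_eq_mul,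
      dotProduct_comm x v]
  simp only [mulVec_sub, mulVec_smul, sub_dotProduct, dotProduct_sub, smul_dotProduct,
    dotProduct_smul, hHv, hHx, hv, smul_eq_mul, dotProduct_comm x v]
  ring

end Decomposition

section Bounds

variable {ι R : Type*} [Fintype ι] [CommRing R] [LinearOrder R] [IsStrictOrderedRing R]

lemma Matrix.IsSymm.dotProduct_mulVec_self_le {H : Matrix ι ι R} (hH : H.IsSymm)
    {lam₁ lam₂ : R} {v : ι → R} (hHv : H *ᵥ v = lam₁ • v) (hv : v ⬝ᵥ v = 1)
    (hsecond : ∀ w : ι → R, w ⬝ᵥ v = 0 → w ⬝ᵥ H *ᵥ w ≤ lam₂ * (w ⬝ᵥ w)) (x : ι → R) :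
    x ⬝ᵥ H *ᵥ x ≤ lam₁ * (v ⬝ᵥ x) ^ 2 + lam₂ * (x ⬝ᵥ x - (v ⬝ᵥ x) ^ 2) := by
  rw [hH.dotProduct_mulVec_eq_of_mulVec_eq_smul hHv hv,
    ← dotProduct_self_sub_smul_of_dotProduct_self_eq_one hv]
  gcongr
  exact hsecond _ (sub_smul_dotProduct_self_of_dotProduct_self_eq_one hv x)

lemma Matrix.IsSymm.dotProduct_mulVec_self_le_of_incoherent {H : Matrix ι ι R} (hH : H.IsSymm)
    {lam₁ lam₂ μ : R} {v : ι → R} (hHv : H *ᵥ v = lam₁ • v) (hv : v ⬝ᵥ v = 1)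
    (hlam₁ : 0 ≤ lam₁) (hlam₂ : 0 ≤ lam₂)
    (hsecond : ∀ w : ι → R, w ⬝ᵥ v = 0 → w ⬝ᵥ H *ᵥ w ≤ lam₂ * (w ⬝ᵥ w)) {x : ι → R}
    (hincoh : (v ⬝ᵥ x) ^ 2 ≤ μ * (x ⬝ᵥ x)) :
    x ⬝ᵥ H *ᵥ x ≤ (lam₁ * μ + lam₂) * (x ⬝ᵥ x) := by
  have hmain := hH.dotProduct_mulVec_self_le hHv hv hsecond x
  have hfirst : lam₁ * (v ⬝ᵥ x) ^ 2 ≤ lam₁ * (μ * (x ⬝ᵥ x)) := by gcongr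
  nlinarith [mul_nonneg hlam₂ (sq_nonneg (v ⬝ᵥ x))]

end Bounds

theorem mu_incoherence_bound_general {n : ℕ}
    (H : Matrix (Fin n) (Fin n) ℝ) (hH : H.PosSemidef)
    (lam₁ lam₂ : ℝ) (v : Fin n → ℝ)
    (hv : H.mulVec v = lam₁ • v) (hvunit : v ⬝ᵥ v = 1)
    (hlam₁ : 0 < lam₁) (hlam₂ : 0 ≤ lam₂)
    (hsecond : ∀ w : Fin n → ℝ, w ⬝ᵥ v = 0 → w ⬝ᵥ H.mulVec w ≤ lam₂ * (w ⬝ᵥ w))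
    (xstar : Fin n → ℝ) (μ τ σ : ℝ)
    (hincoh : (v ⬝ᵥ xstar) ^ 2 ≤ μ * (xstar ⬝ᵥ xstar))
    (hτ : τ ∈ Set.Ioo (0 : ℝ) 1) (hσ : σ = τ * lam₁)
    (hHx : 0 < xstar ⬝ᵥ H.mulVec xstar) :
    (lam₁ - σ) * (xstar ⬝ᵥ xstar) / (xstar ⬝ᵥ H.mulVec xstar)
      ≥ (1 - τ) * (μ + lam₂ / lam₁)⁻¹ := by
  have hsymm : H.IsSymm := isHermitian_iff_isSymm.mp hH.isHermitian
  have hbound := hsymm.dotProduct_mulVec_self_le_of_incoherent hv hvunit hlam₁.le hlam₂ hsecond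
    hincoh
  have hnorm : 0 ≤ xstar ⬝ᵥ xstar := Finset.sum_nonneg fun i _ => mul_self_nonneg (xstar i)
  have hK : 0 < lam₁ * μ + lam₂ := pos_of_mul_pos_left (hHx.trans_le hbound) hnorm
  have hτ₁ : 0 ≤ 1 - τ := sub_nonneg.mpr hτ.2.le
  rw [ge_iff_le, hσ]
  calc (1 - τ) * (μ + lam₂ / lam₁)⁻¹ = (1 - τ) * lam₁ / (lam₁ * μ + lam₂) := by
        field_simp
    _ ≤ (1 - τ) * lam₁ * (xstar ⬝ᵥ xstar) / (xstar ⬝ᵥ H *ᵥ xstar) := by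
        rw [div_le_div_iff₀ hK hHx, mul_assoc _ (xstar ⬝ᵥ xstar), mul_comm (xstar ⬝ᵥ xstar)]
        gcongr
    _ = (lam₁ - τ * lam₁) * (xstar ⬝ᵥ xstar) / (xstar ⬝ᵥ H *ᵥ xstar) := by ring

/-- μ-incoherence proposition: if `H` is symmetric psd with top eigenpair `(λ₁, v)`
(`v` a unit vector, `λ₁ > 0`), second-largest eigenvalue `λ₂` (so the quadratic form on
the orthogonal complement of `v` is bounded by `λ₂`), `x⋆ ≠ 0` is `μ`-incoherent with
`0 ≤ μ < 1`, and `σ = τλ₁` with `τ ∈ (0,1)`, then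
`(λ₁ - σ)‖x⋆‖² / ‖x⋆‖²_H ≥ (1-τ)(μ + λ₂/λ₁)⁻¹` (assuming `‖x⋆‖²_H > 0`). -/
theorem mu_incoherence_bound {n : ℕ}
    (H : Matrix (Fin n) (Fin n) ℝ) (hH : H.PosSemidef)
    (lam₁ lam₂ : ℝ) (v : Fin n → ℝ)
    (hv : H.mulVec v = lam₁ • v) (hvunit : v ⬝ᵥ v = 1)
    (hlam₁ : 0 < lam₁) (hlam₂ : 0 ≤ lam₂)
    (hsecond : ∀ w : Fin n → ℝ, w ⬝ᵥ v = 0 → w ⬝ᵥ H.mulVec w ≤ lam₂ * (w ⬝ᵥ w))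
    (xstar : Fin n → ℝ) (μ τ σ : ℝ)
    (hx : xstar ≠ 0)
    (hμ0 : 0 ≤ μ) (hμ1 : μ < 1)
    (hincoh : (v ⬝ᵥ xstar) ^ 2 ≤ μ * (xstar ⬝ᵥ xstar))
    (hτ : τ ∈ Set.Ioo (0 : ℝ) 1) (hσ : σ = τ * lam₁)
    (hHx : 0 < xstar ⬝ᵥ H.mulVec xstar) :
    (lam₁ - σ) * (xstar ⬝ᵥ xstar) / (xstar ⬝ᵥ H.mulVec xstar)
      ≥ (1 - τ) * (μ + lam₂ / lam₁)⁻¹ :=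
  mu_incoherence_bound_general H hH lam₁ lam₂ v hv hvunit hlam₁ hlam₂ hsecond xstar μ τ σ hincoh hτ
    hσ hHx
end

section
/- Under the hypotheses of the μ-incoherence proposition, if additionally μ + λ₂/λ₁ ≤ (1 − τ)/α for some α ≥ 1, then λ₁‖x⋆‖² / ‖x⋆‖²_H ≥ α. -/
open Matrix

/-- Under the hypotheses of the μ-incoherence proposition, if additionally
`μ + λ₂/λ₁ ≤ (1-τ)/α` for some `α ≥ 1`, then `λ₁‖x⋆‖² / ‖x⋆‖²_H ≥ α`. -/
theorem mu_incoherence_ratio_bound {n : ℕ}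
    (H : Matrix (Fin n) (Fin n) ℝ) (hH : H.PosSemidef)
    (lam₁ lam₂ : ℝ) (v : Fin n → ℝ)
    (hv : H.mulVec v = lam₁ • v) (hvunit : v ⬝ᵥ v = 1)
    (hlam₁ : 0 < lam₁) (hlam₂ : 0 ≤ lam₂)
    (hsecond : ∀ w : Fin n → ℝ, w ⬝ᵥ v = 0 → w ⬝ᵥ H.mulVec w ≤ lam₂ * (w ⬝ᵥ w))
    (xstar : Fin n → ℝ) (μ τ σ α : ℝ)
    (hx : xstar ≠ 0)
    (hμ0 : 0 ≤ μ) (hμ1 : μ < 1)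
    (hincoh : (v ⬝ᵥ xstar) ^ 2 ≤ μ * (xstar ⬝ᵥ xstar))
    (hτ : τ ∈ Set.Ioo (0 : ℝ) 1) (hσ : σ = τ * lam₁)
    (hHx : 0 < xstar ⬝ᵥ H.mulVec xstar)
    (hα : 1 ≤ α) (hcond : μ + lam₂ / lam₁ ≤ (1 - τ) / α) :
    lam₁ * (xstar ⬝ᵥ xstar) / (xstar ⬝ᵥ H.mulVec xstar) ≥ α := by
  obtain ⟨hτ0, hτ1⟩ := hτ
  have hsym : ∀ a b : Fin n → ℝ, a ⬝ᵥ H.mulVec b = b ⬝ᵥ H.mulVec a := by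
    intro a b
    have hHt : Hᵀ = H := by
      rw [← Matrix.conjTranspose_eq_transpose_of_trivial]
      exact hH.isHermitian.eq
    rw [dotProduct_mulVec, ← Matrix.mulVec_transpose, hHt, dotProduct_comm]
  set c := v ⬝ᵥ xstar with hc
  set w := xstar - c • v with hw
  have hwv : w ⬝ᵥ v = 0 := by
    simp only [hw, sub_dotProduct, smul_dotProduct, hvunit, smul_eq_mul, mul_one,
      dotProduct_comm xstar v, hc]
    ring
  have hxdecomp : xstar = w + c • v := by simp [hw]
  have hwHv : w ⬝ᵥ H.mulVec v = 0 := by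
    rw [hv, dotProduct_smul, smul_eq_mul, hwv, mul_zero]
  have hvHv : v ⬝ᵥ H.mulVec v = lam₁ := by
    rw [hv, dotProduct_smul, smul_eq_mul, hvunit, mul_one]
  have hexp : xstar ⬝ᵥ H.mulVec xstar = w ⬝ᵥ H.mulVec w + lam₁ * c ^ 2 := by
    conv_lhs => rw [hxdecomp]
    rw [Matrix.mulVec_add, Matrix.mulVec_smul]
    simp only [dotProduct_add, add_dotProduct, dotProduct_smul, smul_dotProduct,
      smul_eq_mul]
    rw [hwHv, hvHv, hsym v w, hwHv]
    ring
  have hww : w ⬝ᵥ w = xstar ⬝ᵥ xstar - c ^ 2 := by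
    conv_lhs => rw [hw]
    simp only [sub_dotProduct, dotProduct_sub, dotProduct_smul, smul_dotProduct,
      smul_eq_mul, hvunit, dotProduct_comm xstar v, ← hc]
    ring
  set S := xstar ⬝ᵥ xstar with hS
  have hS0 : 0 ≤ S := by
    rw [hS]
    exact Finset.sum_nonneg fun i _ => mul_self_nonneg _
  have hwHw : w ⬝ᵥ H.mulVec w ≤ lam₂ * (w ⬝ᵥ w) := hsecond w hwv
  have hc2 : c ^ 2 ≤ μ * S := hincoh
  have hbound : xstar ⬝ᵥ H.mulVec xstar ≤ lam₁ * μ * S + lam₂ * S := by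
    rw [hexp]
    have h1 : lam₂ * (w ⬝ᵥ w) ≤ lam₂ * S := by
      rw [hww]; nlinarith [sq_nonneg c]
    nlinarith
  -- turn hcond into a multiplied form
  have hα0 : 0 < α := lt_of_lt_of_le one_pos hα
  have hcond' : α * (μ * lam₁ + lam₂) ≤ (1 - τ) * lam₁ := by
    have h2 : (μ + lam₂ / lam₁) * lam₁ ≤ ((1 - τ) / α) * lam₁ :=
      mul_le_mul_of_nonneg_right hcond hlam₁.le
    have h3 : (μ + lam₂ / lam₁) * lam₁ = μ * lam₁ + lam₂ := by
      field_simp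
    have h4 : α * (((1 - τ) / α) * lam₁) = (1 - τ) * lam₁ := by
      field_simp
    calc α * (μ * lam₁ + lam₂) ≤ α * (((1 - τ) / α) * lam₁) := by
          rw [← h3]; exact mul_le_mul_of_nonneg_left h2 hα0.le
      _ = (1 - τ) * lam₁ := h4
  rw [ge_iff_le, le_div_iff₀ hHx]
  have : α * (xstar ⬝ᵥ H.mulVec xstar) ≤ α * (lam₁ * μ * S + lam₂ * S) :=
    mul_le_mul_of_nonneg_left hbound hα0.le
  nlinarith [mul_le_mul_of_nonneg_right hcond' hS0, mul_nonneg (mul_nonneg hτ0.le hlam₁.le) hS0]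
end
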